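/- arXiv:2211.17159 — 5 statements merged into one kernel-verified Lean document; each statement's English description precedes it below -/
import Mathlib

section
/- For any local threshold-based opinion dynamics d on an undirected unsigned graph G = (V, E) of maximum degree Δ, with threshold functions satisfying θ⁺(k) ≤ Δ + 1 and θ⁻(k) ≤ Δ + 1 for all 1 ≤ k ≤ Δ, any sequence ω₁, …, ω_T of pairwise distinct configurations with ω_{t+1} = d(ω_t) for 1 ≤ t < T satisfies T ≤ 4|E| + 2|V| + 4Δ(Δ+1)|V| + 2. -/
/-- The local threshold-based dynamics: a vertex `u` gets opinion 1 iff
(its opinion is 1 and at least `θp (deg u)` neighbors have opinion 1) or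
(its opinion is 0 and at least `θm (deg u)` neighbors have opinion 1). -/
def nextConf {V : Type*} [Fintype V] [DecidableEq V] (G : SimpleGraph V)
    [DecidableRel G.Adj] (θp θm : ℕ → ℕ) (ω : V → Fin 2) : V → Fin 2 :=
  fun u =>
    if (ω u = 1 ∧ θp (G.degree u) ≤ ((G.neighborFinset u).filter (fun v => ω v = 1)).card)
      ∨ (ω u = 0 ∧ θm (G.degree u) ≤ ((G.neighborFinset u).filter (fun v => ω v = 1)).card)
    then 1 else 0

open Finset

def ind : Fin 2 → ℤ := fun a => (a.val : ℤ)

lemma fin2 (a : Fin 2) : a = 0 ∨ a = 1 := by omega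

section Aux
variable {V : Type*} [Fintype V] [DecidableEq V] (G : SimpleGraph V) [DecidableRel G.Adj]

def Pcnt (x : V → Fin 2) (u : V) : ℕ :=
  ((G.neighborFinset u).filter (fun v => x v = 1)).card

def Aval (θp θm : ℕ → ℕ) (x : V → Fin 2) (u : V) : ℤ :=
  (Pcnt G x u : ℤ) + ((θm (G.degree u) : ℤ) - θp (G.degree u)) * ind (x u)

def gfun (θp θm : ℕ → ℕ) (u : V) (a b : Fin 2) : ℤ :=
  (2 * (θm (G.degree u) : ℤ) - 1) * (ind a + ind b)
    - 2 * ((θm (G.degree u) : ℤ) - θp (G.degree u)) * ind b * ind a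

def Ener (θp θm : ℕ → ℕ) (x b : V → Fin 2) : ℤ :=
  -∑ u, ind (b u) * (2 * Aval G θp θm x u)
    + ∑ u, (2 * (θm (G.degree u) : ℤ) - 1) * (ind (x u) + ind (b u))

lemma next_eq_one_iff (θp θm : ℕ → ℕ) (x : V → Fin 2) (u : V) :
    nextConf G θp θm x u = 1 ↔ (θm (G.degree u) : ℤ) ≤ Aval G θp θm x u := by
  rcases fin2 (x u) with h | h <;>
  · simp only [nextConf, Aval, Pcnt, ind, h]
    split <;> rename_i hc <;> simp_all <;> push_cast at * <;> omega

lemma pcnt_cast (x : V → Fin 2) (u : V) :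
    (Pcnt G x u : ℤ) = ∑ v, if G.Adj u v then ind (x v) else 0 := by
  have h1 : G.neighborFinset u = univ.filter (fun v => G.Adj u v) := by
    ext v; simp
  rw [Pcnt, h1, Finset.filter_filter, Finset.card_filter]
  push_cast
  apply Finset.sum_congr rfl
  intro v _
  by_cases h : G.Adj u v <;> by_cases h2 : x v = 1 <;>
    simp [h, h2, ind] <;> omega

lemma psymm (x y : V → Fin 2) :
    ∑ u, ind (y u) * (Pcnt G x u : ℤ) = ∑ u, ind (x u) * (Pcnt G y u : ℤ) := by
  simp only [pcnt_cast, Finset.mul_sum]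
  rw [Finset.sum_comm]
  apply Finset.sum_congr rfl
  intro u _
  apply Finset.sum_congr rfl
  intro v _
  by_cases h : G.Adj u v
  · simp [h, h.symm, mul_comm]
  · rw [if_neg h, if_neg (fun hh => h (G.adj_symm hh)), mul_zero, mul_zero]

lemma aSymm (θp θm : ℕ → ℕ) (x y : V → Fin 2) :
    ∑ u, ind (y u) * Aval G θp θm x u = ∑ u, ind (x u) * Aval G θp θm y u := by
  simp only [Aval, mul_add]
  rw [Finset.sum_add_distrib, Finset.sum_add_distrib, psymm]
  congr 1
  apply Finset.sum_congr rfl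
  intro u _
  ring

lemma aSymm2 (θp θm : ℕ → ℕ) (x y : V → Fin 2) :
    ∑ u, ind (y u) * (2 * Aval G θp θm x u) = ∑ u, ind (x u) * (2 * Aval G θp θm y u) := by
  have h1 : ∑ u, ind (y u) * (2 * Aval G θp θm x u) = 2 * ∑ u, ind (y u) * Aval G θp θm x u := by
    rw [Finset.mul_sum]; apply Finset.sum_congr rfl; intro u _; ring
  have h2 : ∑ u, ind (x u) * (2 * Aval G θp θm y u) = 2 * ∑ u, ind (x u) * Aval G θp θm y u := by
    rw [Finset.mul_sum]; apply Finset.sum_congr rfl; intro u _; ring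
  rw [h1, h2, aSymm]

lemma ener_diff (θp θm : ℕ → ℕ) (x y z : V → Fin 2) :
    Ener G θp θm x y - Ener G θp θm y z =
      ∑ u, (ind (z u) - ind (x u)) *
        (2 * Aval G θp θm y u - (2 * (θm (G.degree u) : ℤ) - 1)) := by
  have e1 : ∑ u, (ind (z u) - ind (x u)) *
        (2 * Aval G θp θm y u - (2 * (θm (G.degree u) : ℤ) - 1))
      = (∑ u, ind (z u) * (2 * Aval G θp θm y u)
          - ∑ u, ind (x u) * (2 * Aval G θp θm y u))
        + (∑ u, (2 * (θm (G.degree u) : ℤ) - 1) * ind (x u)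
          - ∑ u, (2 * (θm (G.degree u) : ℤ) - 1) * ind (z u)) := by
    rw [← Finset.sum_sub_distrib, ← Finset.sum_sub_distrib, ← Finset.sum_add_distrib]
    apply Finset.sum_congr rfl; intro u _; ring
  have e2 : ∀ w w' : V → Fin 2, ∑ u, (2 * (θm (G.degree u) : ℤ) - 1) * (ind (w u) + ind (w' u))
      = ∑ u, (2 * (θm (G.degree u) : ℤ) - 1) * ind (w u)
        + ∑ u, (2 * (θm (G.degree u) : ℤ) - 1) * ind (w' u) := by
    intro w w'
    rw [← Finset.sum_add_distrib]
    apply Finset.sum_congr rfl; intro u _; ring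
  unfold Ener
  rw [aSymm2 G θp θm x y, e1, e2, e2]
  ring

lemma ener_decrease (θp θm : ℕ → ℕ) (x y z : V → Fin 2)
    (hy : y = nextConf G θp θm x) (hz : z = nextConf G θp θm y) (hne : z ≠ x) :
    Ener G θp θm y z + 1 ≤ Ener G θp θm x y := by
  set f : V → ℤ := fun u => (ind (z u) - ind (x u)) *
      (2 * Aval G θp θm y u - (2 * (θm (G.degree u) : ℤ) - 1)) with hf
  have hcase : ∀ u, (z u = x u ∧ f u = 0) ∨ 1 ≤ f u := by
    intro u
    rcases fin2 (z u) with h | h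
    · have hlt : Aval G θp θm y u < (θm (G.degree u) : ℤ) := by
        by_contra hle
        push_neg at hle
        have := (next_eq_one_iff G θp θm y u).2 hle
        rw [← hz, h] at this; exact absurd this (by decide)
      rcases fin2 (x u) with h2 | h2
      · exact Or.inl ⟨h.trans h2.symm, by simp [hf, h, h2, ind]⟩
      · refine Or.inr ?_
        simp only [hf, h, h2, ind]
        simp only [Fin.val_zero, Fin.val_one]
        push_cast
        nlinarith
    · have hge : (θm (G.degree u) : ℤ) ≤ Aval G θp θm y u :=
        (next_eq_one_iff G θp θm y u).1 (by rw [← hz, h])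
      rcases fin2 (x u) with h2 | h2
      · refine Or.inr ?_
        simp only [hf, h, h2, ind]
        simp only [Fin.val_zero, Fin.val_one]
        push_cast
        nlinarith
      · exact Or.inl ⟨h.trans h2.symm, by simp [hf, h, h2, ind]⟩
  obtain ⟨u0, hu0⟩ : ∃ u, z u ≠ x u := by
    by_contra hc; push_neg at hc; exact hne (funext hc)
  have hterm : ∀ u ∈ univ, 0 ≤ f u := by
    intro u _
    rcases hcase u with ⟨_, h0⟩ | h1
    · omega
    · omega
  have hbig : 1 ≤ f u0 := by
    rcases hcase u0 with ⟨heq, _⟩ | h1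
    · exact absurd heq hu0
    · exact h1
  have hsum : 1 ≤ Ener G θp θm x y - Ener G θp θm y z := by
    rw [ener_diff]
    calc (1:ℤ) ≤ f u0 := hbig
    _ ≤ ∑ u, f u := Finset.single_le_sum hterm (Finset.mem_univ u0)
  omega

lemma ener_decomp (θp θm : ℕ → ℕ) (x b : V → Fin 2) :
    Ener G θp θm x b = -2 * ∑ u, ind (b u) * (Pcnt G x u : ℤ)
      + ∑ u, gfun G θp θm u (x u) (b u) := by
  unfold Ener
  have h1 : ∑ u, ind (b u) * (2 * Aval G θp θm x u)
      = 2 * ∑ u, ind (b u) * (Pcnt G x u : ℤ)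
        + ∑ u, 2 * ((θm (G.degree u) : ℤ) - θp (G.degree u)) * ind (b u) * ind (x u) := by
    rw [Finset.mul_sum, ← Finset.sum_add_distrib]
    apply Finset.sum_congr rfl; intro u _
    simp only [Aval]; ring
  rw [h1]
  have h2 : ∑ u, gfun G θp θm u (x u) (b u)
      = ∑ u, (2 * (θm (G.degree u) : ℤ) - 1) * (ind (x u) + ind (b u))
        - ∑ u, 2 * ((θm (G.degree u) : ℤ) - θp (G.degree u)) * ind (b u) * ind (x u) := by
    rw [← Finset.sum_sub_distrib]
    apply Finset.sum_congr rfl; intro u _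
    simp only [gfun]
  rw [h2]
  ring

lemma pcnt_sum_bounds (x b : V → Fin 2) :
    0 ≤ ∑ u, ind (b u) * (Pcnt G x u : ℤ) ∧
    ∑ u, ind (b u) * (Pcnt G x u : ℤ) ≤ 2 * G.edgeFinset.card := by
  constructor
  · apply Finset.sum_nonneg
    intro u _
    rcases fin2 (b u) with h | h <;> simp [h, ind] <;> positivity
  · have hstep : ∑ u, ind (b u) * (Pcnt G x u : ℤ) ≤ ∑ u, (G.degree u : ℤ) := by
      apply Finset.sum_le_sum
      intro u _
      have hP : Pcnt G x u ≤ G.degree u := by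
        rw [← G.card_neighborFinset_eq_degree]
        exact Finset.card_filter_le _ _
      rcases fin2 (b u) with h | h <;> simp [h, ind] <;> exact_mod_cast hP
    have hdeg : ∑ u, (G.degree u : ℤ) = 2 * G.edgeFinset.card := by
      rw [← Nat.cast_sum, G.sum_degrees_eq_twice_card_edges]
      push_cast
      ring
    rw [← hdeg]
    exact hstep

lemma gfun_gap (θp θm : ℕ → ℕ) (u : V)
    (hbp : θp (G.degree u) ≤ G.maxDegree + 1) (hbm : θm (G.degree u) ≤ G.maxDegree + 1)
    (a b a' b' : Fin 2) :
    gfun G θp θm u a b - gfun G θp θm u a' b' ≤ 4 * G.maxDegree + 2 := by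
  rcases fin2 a with h | h <;> rcases fin2 b with h2 | h2 <;>
    rcases fin2 a' with h3 | h3 <;> rcases fin2 b' with h4 | h4 <;>
  · subst h h2 h3 h4
    simp only [gfun, ind, Fin.val_zero, Fin.val_one]
    push_cast
    omega

lemma ener_gap (θp θm : ℕ → ℕ)
    (hbp : ∀ u : V, θp (G.degree u) ≤ G.maxDegree + 1)
    (hbm : ∀ u : V, θm (G.degree u) ≤ G.maxDegree + 1)
    (x b x' b' : V → Fin 2) :
    Ener G θp θm x b - Ener G θp θm x' b'
      ≤ 4 * G.edgeFinset.card + (4 * G.maxDegree + 2) * Fintype.card V := by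
  rw [ener_decomp, ener_decomp]
  have h1 := pcnt_sum_bounds G x b
  have h2 := pcnt_sum_bounds G x' b'
  have h3 : ∑ u, gfun G θp θm u (x u) (b u) - ∑ u, gfun G θp θm u (x' u) (b' u)
      ≤ (4 * G.maxDegree + 2) * Fintype.card V := by
    rw [← Finset.sum_sub_distrib]
    calc ∑ u, (gfun G θp θm u (x u) (b u) - gfun G θp θm u (x' u) (b' u))
        ≤ ∑ _u : V, ((4 : ℤ) * G.maxDegree + 2) := by
          apply Finset.sum_le_sum
          intro u _
          exact gfun_gap G θp θm u (hbp u) (hbm u) _ _ _ _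
    _ = (4 * G.maxDegree + 2) * Fintype.card V := by
          rw [Finset.sum_const, Finset.card_univ]
          push_cast
          ring
  have e2 : (0:ℤ) ≤ 2 * G.edgeFinset.card := by positivity
  linarith [h1.1, h1.2, h2.1, h2.2]

end Aux

lemma next_trunc {V : Type*} [Fintype V] [DecidableEq V] (G : SimpleGraph V)
    [DecidableRel G.Adj] (θp θm : ℕ → ℕ)
    (hθp : ∀ k, 1 ≤ k → k ≤ G.maxDegree → θp k ≤ G.maxDegree + 1)
    (hθm : ∀ k, 1 ≤ k → k ≤ G.maxDegree → θm k ≤ G.maxDegree + 1)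
    (x : V → Fin 2) :
    nextConf G θp θm x
      = nextConf G (fun k => min (θp k) (G.maxDegree + 1))
          (fun k => min (θm k) (G.maxDegree + 1)) x := by
  funext u
  by_cases hd : G.degree u = 0
  · have hcard : ((G.neighborFinset u).filter (fun v => x v = 1)).card = 0 := by
      have h0 : (G.neighborFinset u).card = 0 := by
        rw [G.card_neighborFinset_eq_degree]; exact hd
      have := Finset.card_filter_le (G.neighborFinset u) (fun v => x v = 1)
      omega
    simp only [nextConf, hcard, hd]
    refine if_congr ?_ rfl rfl
    constructor
    · rintro (⟨h1, h2⟩ | ⟨h1, h2⟩)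
      · exact Or.inl ⟨h1, by omega⟩
      · exact Or.inr ⟨h1, by omega⟩
    · rintro (⟨h1, h2⟩ | ⟨h1, h2⟩)
      · exact Or.inl ⟨h1, by omega⟩
      · exact Or.inr ⟨h1, by omega⟩
  · have hle : G.degree u ≤ G.maxDegree := G.degree_le_maxDegree u
    have h1 : min (θp (G.degree u)) (G.maxDegree + 1) = θp (G.degree u) :=
      min_eq_left (hθp _ (by omega) hle)
    have h2 : min (θm (G.degree u)) (G.maxDegree + 1) = θm (G.degree u) :=
      min_eq_left (hθm _ (by omega) hle)
    simp only [nextConf, h1, h2]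


theorem keyT {V : Type*} [Fintype V] [DecidableEq V] (G : SimpleGraph V) [DecidableRel G.Adj]
    (θp θm : ℕ → ℕ)
    (hbp : ∀ u : V, θp (G.degree u) ≤ G.maxDegree + 1)
    (hbm : ∀ u : V, θm (G.degree u) ≤ G.maxDegree + 1)
    (T : ℕ) (ω : ℕ → V → Fin 2)
    (hstep : ∀ t, 1 ≤ t → t < T → ω (t + 1) = nextConf G θp θm (ω t))
    (hdist : ∀ s t, 1 ≤ s → s ≤ T → 1 ≤ t → t ≤ T → ω s = ω t → s = t) :
    T ≤ 4 * G.edgeFinset.card + (4 * G.maxDegree + 2) * Fintype.card V + 2 := by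
  by_cases hT3 : T ≤ 2
  · omega
  push_neg at hT3
  set e : ℕ → ℤ := fun t => Ener G θp θm (ω t) (ω (t + 1)) with he
  have desc : ∀ t, 1 ≤ t → t + 1 < T → e (t + 1) + 1 ≤ e t := by
    intro t ht1 ht2
    have hy := hstep t ht1 (by omega)
    have hz := hstep (t + 1) (by omega) ht2
    have hne : ω (t + 2) ≠ ω t := by
      intro hc
      have := hdist (t + 2) t (by omega) (by omega) ht1 (by omega) hc
      omega
    have := ener_decrease G θp θm (ω t) (ω (t + 1)) (ω (t + 2)) hy (by rw [hz]) hne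
    simpa [he, show t + 1 + 1 = t + 2 from rfl] using this
  have tel : ∀ t, 1 ≤ t → t < T → e t + (t : ℤ) - 1 ≤ e 1 := by
    intro t
    induction t with
    | zero => omega
    | succ n ih =>
      intro _ hlt
      by_cases hn : 1 ≤ n
      · have h1 := desc n hn (by omega)
        have h2 := ih hn (by omega)
        push_cast
        push_cast at h2
        omega
      · have : n = 0 := by omega
        subst this
        simp
  have hfin := tel (T - 1) (by omega) (by omega)
  have hgap := ener_gap G θp θm hbp hbm (ω 1) (ω 2) (ω (T - 1)) (ω (T - 1 + 1))
  have he1 : e 1 = Ener G θp θm (ω 1) (ω 2) := rfl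
  have heT : e (T - 1) = Ener G θp θm (ω (T - 1)) (ω (T - 1 + 1)) := rfl
  rw [heT, he1] at hfin
  have hcast : ((T - 1 : ℕ) : ℤ) = (T : ℤ) - 1 := by
    have : 1 ≤ T := by omega
    push_cast [this]
    ring
  rw [hcast] at hfin
  have : (T : ℤ) ≤ 4 * G.edgeFinset.card + (4 * G.maxDegree + 2) * Fintype.card V + 2 := by
    linarith
  exact_mod_cast this



open Finset


/-- `[y₁y₂y₃]`: the number of pairs `(v, i)` with `1 ≤ i ≤ T - 2` such that the history of
`v` reads `y₁ y₂ y₃` at times `i, i+1, i+2`. -/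
def patCount {V : Type*} [Fintype V] (T : ℕ) (ω : ℕ → V → Fin 2)
    (y1 y2 y3 : Fin 2) : ℕ :=
  (((Finset.univ : Finset V) ×ˢ Finset.Icc 1 (T - 2)).filter
    (fun p => ω p.2 p.1 = y1 ∧ ω (p.2 + 1) p.1 = y2 ∧ ω (p.2 + 2) p.1 = y3)).card

/-- `[y₁y₂y₃, k]`: as `patCount`, restricted to vertices of degree exactly `k`. -/
def patCountDeg {V : Type*} [Fintype V] [DecidableEq V] (G : SimpleGraph V) [DecidableRel G.Adj]
    (T : ℕ) (ω : ℕ → V → Fin 2) (y1 y2 y3 : Fin 2) (k : ℕ) : ℕ :=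
  (((Finset.univ : Finset V) ×ˢ Finset.Icc 1 (T - 2)).filter
    (fun p => G.degree p.1 = k ∧ ω p.2 p.1 = y1 ∧ ω (p.2 + 1) p.1 = y2 ∧
      ω (p.2 + 2) p.1 = y3)).card

/-- `[y₁y₂y₃, ?1?]`: the number of triples `(u, v, i)` with `v` a neighbor of `u` and
`1 ≤ i ≤ T - 2` such that the history of `u` reads `y₁ y₂ y₃` at times `i, i+1, i+2`
and `ω_{i+1}(v) = 1`. -/
def patCountNbr {V : Type*} [Fintype V] [DecidableEq V] (G : SimpleGraph V) [DecidableRel G.Adj]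
    (T : ℕ) (ω : ℕ → V → Fin 2) (y1 y2 y3 : Fin 2) : ℕ :=
  (((Finset.univ : Finset (V × V)) ×ˢ Finset.Icc 1 (T - 2)).filter
    (fun p => G.Adj p.1.1 p.1.2 ∧ ω p.2 p.1.1 = y1 ∧ ω (p.2 + 1) p.1.1 = y2 ∧
      ω (p.2 + 2) p.1.1 = y3 ∧ ω (p.2 + 1) p.1.2 = 1)).card

/-- `[y₁y₂y₃, ?1?, k]`: as `patCountNbr`, restricted to `u` of degree exactly `k`. -/
def patCountNbrDeg {V : Type*} [Fintype V] [DecidableEq V] (G : SimpleGraph V)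
    [DecidableRel G.Adj] (T : ℕ) (ω : ℕ → V → Fin 2) (y1 y2 y3 : Fin 2) (k : ℕ) : ℕ :=
  (((Finset.univ : Finset (V × V)) ×ˢ Finset.Icc 1 (T - 2)).filter
    (fun p => G.Adj p.1.1 p.1.2 ∧ G.degree p.1.1 = k ∧ ω p.2 p.1.1 = y1 ∧
      ω (p.2 + 1) p.1.1 = y2 ∧ ω (p.2 + 2) p.1.1 = y3 ∧ ω (p.2 + 1) p.1.2 = 1)).card

/-- The deterministic majority dynamics. -/
def majNext {V : Type*} [Fintype V] [DecidableEq V] (G : SimpleGraph V)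
    [DecidableRel G.Adj] (ω : V → Fin 2) : V → Fin 2 :=
  fun u =>
    if 2 * ((G.neighborFinset u).filter (fun v => ω v = 1)).card > G.degree u then 1
    else if 2 * ((G.neighborFinset u).filter (fun v => ω v = 1)).card = G.degree u then ω u
    else 0

/-- For any local threshold-based dynamics on an undirected unsigned graph
of maximum degree Δ, with `θ⁺(k) ≤ Δ + 1` and `θ⁻(k) ≤ Δ + 1` for all `1 ≤ k ≤ Δ`,
any sequence `ω₁, …, ω_T` of pairwise distinct configurations with `ω_{t+1} = d(ω_t)`
satisfies `T ≤ 4|E| + 2|V| + 4Δ(Δ+1)|V| + 2`. -/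
theorem stmt0 {V : Type*} [Fintype V] [DecidableEq V] (G : SimpleGraph V)
    [DecidableRel G.Adj] (θp θm : ℕ → ℕ)
    (hθp : ∀ k, 1 ≤ k → k ≤ G.maxDegree → θp k ≤ G.maxDegree + 1)
    (hθm : ∀ k, 1 ≤ k → k ≤ G.maxDegree → θm k ≤ G.maxDegree + 1)
    (T : ℕ) (hT : 1 ≤ T) (ω : ℕ → V → Fin 2)
    (hstep : ∀ t, 1 ≤ t → t < T → ω (t + 1) = nextConf G θp θm (ω t))
    (hdist : ∀ s t, 1 ≤ s → s ≤ T → 1 ≤ t → t ≤ T → ω s = ω t → s = t) :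
    T ≤ 4 * G.edgeFinset.card + 2 * Fintype.card V +
      4 * G.maxDegree * (G.maxDegree + 1) * Fintype.card V + 2 := by
  have hbp : ∀ u : V, min (θp (G.degree u)) (G.maxDegree + 1) ≤ G.maxDegree + 1 :=
    fun u => min_le_right _ _
  have hbm : ∀ u : V, min (θm (G.degree u)) (G.maxDegree + 1) ≤ G.maxDegree + 1 :=
    fun u => min_le_right _ _
  have hstep' : ∀ t, 1 ≤ t → t < T →
      ω (t + 1) = nextConf G (fun k => min (θp k) (G.maxDegree + 1))
        (fun k => min (θm k) (G.maxDegree + 1)) (ω t) := by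
    intro t h1 h2
    rw [hstep t h1 h2, next_trunc G θp θm hθp hθm]
  have hkey := keyT G _ _ hbp hbm T ω hstep' hdist
  have h1 : 4 * G.maxDegree * Fintype.card V
      ≤ 4 * G.maxDegree * (G.maxDegree + 1) * Fintype.card V := by
    have h2 : Fintype.card V ≤ (G.maxDegree + 1) * Fintype.card V :=
      Nat.le_mul_of_pos_left _ (by omega)
    calc 4 * G.maxDegree * Fintype.card V
        ≤ 4 * G.maxDegree * ((G.maxDegree + 1) * Fintype.card V) :=
          Nat.mul_le_mul_left _ h2
    _ = 4 * G.maxDegree * (G.maxDegree + 1) * Fintype.card V := by ring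
  have h3 : (4 * G.maxDegree + 2) * Fintype.card V
      = 4 * G.maxDegree * Fintype.card V + 2 * Fintype.card V := by ring
  omega
end

section
/- For the deterministic majority dynamics d_M on an undirected unsigned graph G = (V, E) of maximum degree Δ, any sequence ω₁, …, ω_T of pairwise distinct configurations with ω_{t+1} = d_M(ω_t) for 1 ≤ t < T satisfies T ≤ 4|E| + 2|V| + 4Δ(Δ+1)|V| + 2. -/
open Finset

namespace Stmt1Aux

variable {V : Type*} [Fintype V] [DecidableEq V] (G : SimpleGraph V) [DecidableRel G.Adj]

def f2 (a : Fin 2) : ℤ := a.val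

lemma f2_cases (a : Fin 2) : f2 a = 0 ∨ f2 a = 1 := by revert a; decide

lemma f2_inj {a b : Fin 2} (h : f2 a = f2 b) : a = b := by revert a b; decide

lemma f2_eq_one {a : Fin 2} : f2 a = 1 ↔ a = 1 := by revert a; decide

lemma f2_eq_zero {a : Fin 2} : f2 a = 0 ↔ a = 0 := by revert a; decide

lemma ite_f2 (a : Fin 2) : (if a = 1 then (1:ℤ) else 0) = f2 a := by revert a; decide

def Pc (x : V → Fin 2) (u : V) : ℤ :=
  (((G.neighborFinset u).filter (fun v => x v = 1)).card : ℤ)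

def Sv (x : V → Fin 2) (u : V) : ℤ := 4 * Pc G x u + 2 * f2 (x u)

def th (u : V) : ℤ := 2 * G.degree u + 1

def En (x y : V → Fin 2) : ℤ :=
  ∑ u, (th G u * (f2 (x u) + f2 (y u)) - f2 (y u) * Sv G x u)

lemma Pc_nonneg (x : V → Fin 2) (u : V) : 0 ≤ Pc G x u := Int.natCast_nonneg _

lemma Pc_le_deg (x : V → Fin 2) (u : V) : Pc G x u ≤ G.degree u := by
  unfold Pc
  have h := Finset.card_filter_le (G.neighborFinset u) (fun v => x v = 1)
  rw [G.card_neighborFinset_eq_degree] at h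
  exact_mod_cast h

lemma Pc_eq_sum (x : V → Fin 2) (u : V) :
    Pc G x u = ∑ v ∈ G.neighborFinset u, f2 (x v) := by
  unfold Pc
  rw [Finset.card_filter]
  push_cast
  exact Finset.sum_congr rfl fun v _ => ite_f2 (x v)

lemma sum_mul_Pc (x y : V → Fin 2) :
    ∑ u, f2 (y u) * Pc G x u = ∑ u, f2 (x u) * Pc G y u := by
  have key : ∀ a b : V → Fin 2, ∑ u, f2 (b u) * Pc G a u
      = ∑ u, ∑ v, if G.Adj u v then f2 (b u) * f2 (a v) else 0 := by
    intro a b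
    refine Finset.sum_congr rfl fun u _ => ?_
    rw [Pc_eq_sum, SimpleGraph.neighborFinset_eq_filter, Finset.sum_filter, Finset.mul_sum]
    refine Finset.sum_congr rfl fun v _ => ?_
    split <;> simp
  rw [key, key, Finset.sum_comm]
  refine Finset.sum_congr rfl fun v _ => Finset.sum_congr rfl fun u _ => ?_
  by_cases h : G.Adj u v
  · rw [if_pos h, if_pos ((G.adj_comm u v).mp h)]; ring
  · rw [if_neg h, if_neg (fun h' => h ((G.adj_comm u v).mpr h'))]

lemma sum_mul_Sv (x y : V → Fin 2) :
    ∑ u, f2 (y u) * Sv G x u = ∑ u, f2 (x u) * Sv G y u := by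
  have e1 : ∀ a b : V → Fin 2, ∑ u, f2 (b u) * Sv G a u
      = 4 * (∑ u, f2 (b u) * Pc G a u) + 2 * ∑ u, f2 (b u) * f2 (a u) := by
    intro a b
    unfold Sv
    rw [Finset.mul_sum, Finset.mul_sum, ← Finset.sum_add_distrib]
    exact Finset.sum_congr rfl fun u _ => by ring
  rw [e1, e1, sum_mul_Pc]
  have h2 : ∑ u, f2 (y u) * f2 (x u) = ∑ u, f2 (x u) * f2 (y u) :=
    Finset.sum_congr rfl fun u _ => mul_comm _ _
  rw [h2]

lemma maj_ge {x : V → Fin 2} {u : V} (h : majNext G x u = 1) :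
    th G u + 1 ≤ Sv G x u := by
  have hf := f2_cases (x u)
  unfold majNext at h
  unfold Sv th Pc
  split_ifs at h with h1 h2
  · have h1' : (G.degree u : ℤ) <
        2 * (((G.neighborFinset u).filter (fun v => x v = 1)).card : ℤ) := by exact_mod_cast h1
    omega
  · have h2' : 2 * (((G.neighborFinset u).filter (fun v => x v = 1)).card : ℤ)
        = (G.degree u : ℤ) := by exact_mod_cast h2
    have hx1 : f2 (x u) = 1 := f2_eq_one.mpr h
    omega
  · exact absurd h (by decide)

lemma maj_le {x : V → Fin 2} {u : V} (h : majNext G x u = 0) :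
    Sv G x u ≤ th G u - 1 := by
  have hf := f2_cases (x u)
  unfold majNext at h
  unfold Sv th Pc
  split_ifs at h with h1 h2
  · exact absurd h (by decide)
  · have h2' : 2 * (((G.neighborFinset u).filter (fun v => x v = 1)).card : ℤ)
        = (G.degree u : ℤ) := by exact_mod_cast h2
    have hx0 : f2 (x u) = 0 := f2_eq_zero.mpr h
    omega
  · have h1' : ¬ (G.degree u : ℤ) <
        2 * (((G.neighborFinset u).filter (fun v => x v = 1)).card : ℤ) := by exact_mod_cast h1
    have h2' : ¬ 2 * (((G.neighborFinset u).filter (fun v => x v = 1)).card : ℤ)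
        = (G.degree u : ℤ) := by exact_mod_cast h2
    omega

lemma En_delta (x y z : V → Fin 2) :
    En G y z - En G x y = ∑ u, (f2 (x u) - f2 (z u)) * (Sv G y u - th G u) := by
  have expand : En G y z - En G x y
      + (∑ u, f2 (x u) * Sv G y u - ∑ u, f2 (y u) * Sv G x u)
      = ∑ u, (f2 (x u) - f2 (z u)) * (Sv G y u - th G u) := by
    unfold En
    rw [← Finset.sum_sub_distrib, ← Finset.sum_sub_distrib, ← Finset.sum_add_distrib]
    exact Finset.sum_congr rfl fun u _ => by ring
  rw [sum_mul_Sv, sub_self, add_zero] at expand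
  exact expand

lemma En_step {x y z : V → Fin 2} (hz : z = majNext G y)
    (hne : x ≠ z) : En G y z + 1 ≤ En G x y := by
  have hzu : ∀ u, majNext G y u = z u := fun u => by rw [hz]
  have hterm : ∀ u, x u ≠ z u →
      (f2 (x u) - f2 (z u)) * (Sv G y u - th G u) ≤ -1 := by
    intro u hu
    rcases f2_cases (x u) with hx | hx <;> rcases f2_cases (z u) with hzz | hzz
    · exact absurd (f2_inj (hx.trans hzz.symm)) hu
    · have h1 : th G u + 1 ≤ Sv G y u := maj_ge G ((hzu u).trans (f2_eq_one.mp hzz))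
      rw [hx, hzz]; linarith
    · have h1 : Sv G y u ≤ th G u - 1 := maj_le G ((hzu u).trans (f2_eq_zero.mp hzz))
      rw [hx, hzz]; linarith
    · exact absurd (f2_inj (hx.trans hzz.symm)) hu
  have hterm0 : ∀ u, (f2 (x u) - f2 (z u)) * (Sv G y u - th G u) ≤ 0 := by
    intro u
    by_cases hu : x u = z u
    · rw [hu, sub_self, zero_mul]
    · linarith [hterm u hu]
  obtain ⟨u0, hu0⟩ : ∃ u, x u ≠ z u := by
    by_contra hc
    push_neg at hc
    exact hne (funext hc)
  have hsum : ∑ u, (f2 (x u) - f2 (z u)) * (Sv G y u - th G u) ≤ -1 := by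
    have h1 : -((f2 (x u0) - f2 (z u0)) * (Sv G y u0 - th G u0))
        ≤ ∑ u, -((f2 (x u) - f2 (z u)) * (Sv G y u - th G u)) :=
      Finset.single_le_sum (f := fun u => -((f2 (x u) - f2 (z u)) * (Sv G y u - th G u)))
        (fun u _ => neg_nonneg.mpr (hterm0 u)) (Finset.mem_univ u0)
    have h2 : ∑ u, -((f2 (x u) - f2 (z u)) * (Sv G y u - th G u))
        = -∑ u, (f2 (x u) - f2 (z u)) * (Sv G y u - th G u) := by
      rw [← Finset.sum_neg_distrib]
    rw [h2] at h1
    linarith [hterm u0 hu0]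
  have hd := En_delta G x y z
  linarith

lemma deg_sum_int : ∑ u : V, (G.degree u : ℤ) = 2 * G.edgeFinset.card := by
  exact_mod_cast G.sum_degrees_eq_twice_card_edges

lemma En_le (x y : V → Fin 2) :
    En G x y ≤ 8 * G.edgeFinset.card + 2 * Fintype.card V := by
  have hterm : ∀ u ∈ (Finset.univ : Finset V),
      th G u * (f2 (x u) + f2 (y u)) - f2 (y u) * Sv G x u
        ≤ 4 * (G.degree u : ℤ) + 2 := by
    intro u _
    have h1 := Pc_nonneg G x u
    have h3 : (0:ℤ) ≤ (G.degree u : ℤ) := Int.natCast_nonneg _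
    rcases f2_cases (x u) with hx | hx <;> rcases f2_cases (y u) with hy | hy <;>
      unfold Sv th <;> rw [hx, hy] <;> nlinarith
  calc En G x y ≤ ∑ u, ((4:ℤ) * (G.degree u : ℤ) + 2) := Finset.sum_le_sum hterm
    _ = 8 * G.edgeFinset.card + 2 * Fintype.card V := by
        rw [Finset.sum_add_distrib, ← Finset.mul_sum, deg_sum_int, Finset.sum_const,
          Finset.card_univ, nsmul_eq_mul]
        ring

lemma En_ge (x y : V → Fin 2) :
    -(4 * (G.edgeFinset.card : ℤ) + Fintype.card V) ≤ En G x y := by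
  have hterm : ∀ u ∈ (Finset.univ : Finset V),
      -((2:ℤ) * (G.degree u : ℤ) + 1)
        ≤ th G u * (f2 (x u) + f2 (y u)) - f2 (y u) * Sv G x u := by
    intro u _
    have h1 := Pc_nonneg G x u
    have h2 := Pc_le_deg G x u
    have h3 : (0:ℤ) ≤ (G.degree u : ℤ) := Int.natCast_nonneg _
    rcases f2_cases (x u) with hx | hx <;> rcases f2_cases (y u) with hy | hy <;>
      unfold Sv th <;> rw [hx, hy] <;> nlinarith
  calc -(4 * (G.edgeFinset.card : ℤ) + Fintype.card V)
      = ∑ u : V, -((2:ℤ) * (G.degree u : ℤ) + 1) := by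
        rw [Finset.sum_neg_distrib, Finset.sum_add_distrib, ← Finset.mul_sum, deg_sum_int,
          Finset.sum_const, Finset.card_univ, nsmul_eq_mul]
        ring
    _ ≤ En G x y := Finset.sum_le_sum hterm

end Stmt1Aux

/-- For the deterministic majority dynamics on an undirected unsigned graph of
maximum degree Δ, any sequence `ω₁, …, ω_T` of pairwise distinct configurations with
`ω_{t+1} = d_M(ω_t)` satisfies `T ≤ 4|E| + 2|V| + 4Δ(Δ+1)|V| + 2`. -/


theorem stmt1 {V : Type*} [Fintype V] [DecidableEq V] (G : SimpleGraph V)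
    [DecidableRel G.Adj]
    (T : ℕ) (hT : 1 ≤ T) (ω : ℕ → V → Fin 2)
    (hstep : ∀ t, 1 ≤ t → t < T → ω (t + 1) = majNext G (ω t))
    (hdist : ∀ s t, 1 ≤ s → s ≤ T → 1 ≤ t → t ≤ T → ω s = ω t → s = t) :
    T ≤ 4 * G.edgeFinset.card + 2 * Fintype.card V +
      4 * G.maxDegree * (G.maxDegree + 1) * Fintype.card V + 2 := by
  by_cases hT2 : T ≤ 2
  · omega
  push_neg at hT2
  by_cases hD : G.maxDegree = 0
  · exfalso
    have h21 : ω 2 = ω 1 := by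
      have h := hstep 1 le_rfl (by omega)
      rw [h]
      funext u
      have hdeg : G.degree u = 0 := Nat.le_zero.mp (hD ▸ G.degree_le_maxDegree u)
      have hcard : ((G.neighborFinset u).filter (fun v => ω 1 v = 1)).card = 0 := by
        have hc := Finset.card_filter_le (G.neighborFinset u) (fun v => ω 1 v = 1)
        rw [G.card_neighborFinset_eq_degree, hdeg] at hc
        omega
      unfold majNext
      rw [hcard, hdeg]
      simp
    have := hdist 2 1 (by omega) (by omega) le_rfl (by omega) h21
    omega
  have hD1 : 1 ≤ G.maxDegree := Nat.one_le_iff_ne_zero.mpr hD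
  -- the energy decreases by at least 1 at each step
  have chain : ∀ k, k ≤ T - 2 →
      Stmt1Aux.En G (ω (1 + k)) (ω (1 + k + 1)) ≤ Stmt1Aux.En G (ω 1) (ω 2) - k := by
    intro k hk
    induction k with
    | zero => simp
    | succ n ih =>
      have hn := ih (by omega)
      have hz : ω (1 + n + 1 + 1) = majNext G (ω (1 + n + 1)) := by
        have := hstep (1 + n + 1) (by omega) (by omega)
        rw [← this]
      have hne : ω (1 + n) ≠ ω (1 + n + 1 + 1) := by
        intro h
        have := hdist (1 + n) (1 + n + 1 + 1) (by omega) (by omega) (by omega) (by omega) h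
        omega
      have hstep' := Stmt1Aux.En_step G hz hne
      have e1 : 1 + (n + 1) = 1 + n + 1 := by omega
      rw [e1]
      push_cast
      linarith
  have hfin := chain (T - 2) le_rfl
  have e1 : 1 + (T - 2) = T - 1 := by omega
  have e2 : T - 1 + 1 = T := by omega
  rw [e1, e2] at hfin
  have hub := Stmt1Aux.En_le G (ω 1) (ω 2)
  have hlb := Stmt1Aux.En_ge G (ω (T - 1)) (ω T)
  have hcast : ((T - 2 : ℕ) : ℤ) = (T : ℤ) - 2 := by omega
  rw [hcast] at hfin
  have hTbound : (T : ℤ) ≤ 12 * G.edgeFinset.card + 3 * Fintype.card V + 2 := by linarith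
  have hTb : T ≤ 12 * G.edgeFinset.card + 3 * Fintype.card V + 2 := by exact_mod_cast hTbound
  -- degree sum bound : 2|E| ≤ Δ|V|
  have hE : 2 * G.edgeFinset.card ≤ G.maxDegree * Fintype.card V := by
    rw [← G.sum_degrees_eq_twice_card_edges]
    calc ∑ v, G.degree v ≤ ∑ _v : V, G.maxDegree :=
          Finset.sum_le_sum fun v _ => G.degree_le_maxDegree v
      _ = Fintype.card V * G.maxDegree := by
          rw [Finset.sum_const, Finset.card_univ, smul_eq_mul]
      _ = G.maxDegree * Fintype.card V := Nat.mul_comm _ _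
  have hVV : Fintype.card V ≤ G.maxDegree * G.maxDegree * Fintype.card V := by
    have h11 : 1 * 1 ≤ G.maxDegree * G.maxDegree := Nat.mul_le_mul hD1 hD1
    nlinarith
  nlinarith [hTb, hE, hVV]
end

section
/- For the underpopulation dynamics on an undirected unsigned graph G = (V, E) of maximum degree Δ, i.e. the local threshold-based dynamics with constant threshold functions θ⁺(k) = t₁ and θ⁻(k) = t₂ where t₁ ≤ Δ + 1 and t₂ ≤ Δ + 1, any sequence ω₁, …, ω_T of pairwise distinct configurations with ω_{t+1} = d(ω_t) for 1 ≤ t < T satisfies T ≤ 4|E| + 2|V| + 4Δ(Δ+1)|V| + 2. -/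
open Finset

section Aux
set_option linter.unusedSectionVars false
set_option linter.unusedVariables false
open Finset

variable {V : Type*} [Fintype V] [DecidableEq V] (G : SimpleGraph V)
    [DecidableRel G.Adj] (t1 t2 : ℕ)

private lemma fin2_cases (b : Fin 2) : b = 0 ∨ b = 1 := by revert b; decide

/-- local field at `u` (times 2), including self-loop of weight `t2 - t1`. -/
def locA (x : V → Fin 2) (u : V) : ℤ :=
  2 * ∑ v ∈ G.neighborFinset u, ((x v).val : ℤ)
    + 2 * ((t2 : ℤ) - (t1 : ℤ)) * ((x u).val : ℤ)

def Sedge (x y : V → Fin 2) : ℤ :=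
  ∑ u, ∑ v ∈ G.neighborFinset u, ((y u).val : ℤ) * ((x v).val : ℤ)

def Sself (x y : V → Fin 2) : ℤ := ∑ u, ((y u).val : ℤ) * ((x u).val : ℤ)

def Stot (x y : V → Fin 2) : ℤ := ∑ u, (((x u).val : ℤ) + ((y u).val : ℤ))

def engy (x y : V → Fin 2) : ℤ :=
  -(2 * Sedge G x y) - (2 * ((t2 : ℤ) - (t1 : ℤ))) * Sself x y
    + (2 * (t2 : ℤ) - 1) * Stot x y

lemma sumA_eq (x y : V → Fin 2) :
    ∑ u, ((y u).val : ℤ) * locA G t1 t2 x u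
      = 2 * Sedge G x y + (2 * ((t2 : ℤ) - (t1 : ℤ))) * Sself x y := by
  unfold Sedge Sself
  rw [Finset.mul_sum, Finset.mul_sum, ← Finset.sum_add_distrib]
  refine Finset.sum_congr rfl fun u _ => ?_
  unfold locA
  conv_rhs => rw [← Finset.mul_sum]
  ring

lemma engy_eq (x y : V → Fin 2) :
    engy G t1 t2 x y = -∑ u, ((y u).val : ℤ) * locA G t1 t2 x u
      + (2 * (t2 : ℤ) - 1) * Stot x y := by
  rw [sumA_eq]; unfold engy; ring

omit [DecidableEq V] in
lemma sum_val_eq_card (x : V → Fin 2) (s : Finset V) :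
    ∑ v ∈ s, ((x v).val : ℤ) = ((s.filter (fun v => x v = 1)).card : ℤ) := by
  rw [← Finset.sum_boole]
  refine Finset.sum_congr rfl fun v _ => ?_
  rcases fin2_cases (x v) with h | h <;> simp [h]

lemma sedge_symm (x y : V → Fin 2) : Sedge G x y = Sedge G y x := by
  unfold Sedge
  simp only [SimpleGraph.neighborFinset_eq_filter, Finset.sum_filter]
  rw [Finset.sum_comm]
  refine Finset.sum_congr rfl fun u _ => Finset.sum_congr rfl fun v _ => ?_
  by_cases h : G.Adj u v
  · simp [h, h.symm, mul_comm]
  · have h' : ¬ G.Adj v u := fun hh => h hh.symm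
    simp [h, h']

omit [DecidableEq V] in
lemma sself_symm (x y : V → Fin 2) : Sself x y = Sself y x :=
  Finset.sum_congr rfl fun u _ => mul_comm _ _

lemma sumA_symm (x y : V → Fin 2) :
    ∑ u, ((y u).val : ℤ) * locA G t1 t2 x u
      = ∑ u, ((x u).val : ℤ) * locA G t1 t2 y u := by
  rw [sumA_eq, sumA_eq, sedge_symm, sself_symm]

lemma rule_iff (x : V → Fin 2) (u : V) :
    nextConf G (fun _ => t1) (fun _ => t2) x u = 1
      ↔ 2 * (t2 : ℤ) - 1 < locA G t1 t2 x u := by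
  have hsplit : ∀ (C : Prop) [Decidable C], ((if C then (1 : Fin 2) else 0) = 1 ↔ C) := by
    intro C _; split_ifs with hC <;> simp [hC]
  unfold nextConf
  rw [hsplit]
  unfold locA
  rw [sum_val_eq_card]
  rcases fin2_cases (x u) with h | h <;>
    simp [h, show (0:Fin 2) ≠ 1 by decide, show (1:Fin 2) ≠ 0 by decide] <;>
    push_cast <;> omega

lemma rule_zero (x : V → Fin 2) (u : V) :
    nextConf G (fun _ => t1) (fun _ => t2) x u = 0
      → locA G t1 t2 x u < 2 * (t2 : ℤ) - 1 := by
  intro h0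
  have hpar : ∃ k : ℤ, locA G t1 t2 x u = 2 * k :=
    ⟨(∑ v ∈ G.neighborFinset u, ((x v).val : ℤ)) + ((t2 : ℤ) - t1) * ((x u).val : ℤ),
      by unfold locA; ring⟩
  have hne1 : ¬ (2 * (t2 : ℤ) - 1 < locA G t1 t2 x u) := by
    intro hlt
    have := (rule_iff G t1 t2 x u).mpr hlt
    rw [h0] at this
    exact absurd this (by decide)
  obtain ⟨k, hk⟩ := hpar
  omega

lemma engy_dec (x1 x2 x3 : V → Fin 2)
    (h3 : x3 = nextConf G (fun _ => t1) (fun _ => t2) x2) (hne : x3 ≠ x1) :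
    engy G t1 t2 x2 x3 + 1 ≤ engy G t1 t2 x1 x2 := by
  set θ : ℤ := 2 * (t2 : ℤ) - 1 with hθ
  have key : engy G t1 t2 x1 x2 - engy G t1 t2 x2 x3
      = ∑ u, (((x3 u).val : ℤ) - ((x1 u).val : ℤ)) * (locA G t1 t2 x2 u - θ) := by
    rw [engy_eq, engy_eq, sumA_symm G t1 t2 x1 x2]
    unfold Stot
    rw [Finset.mul_sum, Finset.mul_sum]
    simp only [neg_add, sub_eq_add_neg, neg_neg, ← Finset.sum_neg_distrib,
      ← Finset.sum_add_distrib]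
    exact Finset.sum_congr rfl fun u _ => by ring
  have hsign : ∀ u, (x3 u = 1 → θ < locA G t1 t2 x2 u)
      ∧ (x3 u = 0 → locA G t1 t2 x2 u < θ) := by
    intro u
    constructor
    · intro h; exact (rule_iff G t1 t2 x2 u).mp (h3 ▸ h)
    · intro h; exact rule_zero G t1 t2 x2 u (h3 ▸ h)
  have hval0 : (((0:Fin 2) : Fin 2).val : ℤ) = 0 := by decide
  have hval1 : (((1:Fin 2) : Fin 2).val : ℤ) = 1 := by decide
  have hnn : ∀ u ∈ (Finset.univ : Finset V),
      (0:ℤ) ≤ (((x3 u).val : ℤ) - ((x1 u).val : ℤ)) * (locA G t1 t2 x2 u - θ) := by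
    intro u _
    rcases fin2_cases (x3 u) with h3u | h3u <;> rcases fin2_cases (x1 u) with h1u | h1u <;>
      simp only [h3u, h1u, hval0, hval1]
    all_goals first
      | linarith [(hsign u).2 h3u]
      | linarith [(hsign u).1 h3u]
      | simp
  obtain ⟨u0, hu0⟩ : ∃ u, x3 u ≠ x1 u := by
    by_contra hc; push_neg at hc; exact hne (funext hc)
  have h1le : (1:ℤ) ≤ (((x3 u0).val : ℤ) - ((x1 u0).val : ℤ)) * (locA G t1 t2 x2 u0 - θ) := by
    rcases fin2_cases (x3 u0) with h3u | h3u <;> rcases fin2_cases (x1 u0) with h1u | h1u <;>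
      (rw [h3u, h1u] at hu0 ⊢; simp only [hval0, hval1])
    all_goals first
      | exact absurd rfl hu0
      | linarith [(hsign u0).2 h3u]
      | linarith [(hsign u0).1 h3u]
  have := le_trans h1le (Finset.single_le_sum hnn (Finset.mem_univ u0))
  linarith [key, this]

private lemma val_nonneg' (b : Fin 2) : (0:ℤ) ≤ (b.val : ℤ) := by positivity

private lemma val_le_one (b : Fin 2) : (b.val : ℤ) ≤ 1 := by
  have := b.isLt; exact_mod_cast Nat.lt_succ_iff.mp this

lemma Sedge_nonneg (x y : V → Fin 2) : 0 ≤ Sedge G x y :=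
  Finset.sum_nonneg fun u _ => Finset.sum_nonneg fun v _ =>
    mul_nonneg (val_nonneg' _) (val_nonneg' _)

lemma Sedge_le (x y : V → Fin 2) : Sedge G x y ≤ 2 * (G.edgeFinset.card : ℤ) := by
  have h1 : Sedge G x y ≤ ∑ u, ((G.degree u : ℕ) : ℤ) := by
    refine Finset.sum_le_sum fun u _ => ?_
    have h2 : ∑ v ∈ G.neighborFinset u, ((y u).val : ℤ) * ((x v).val : ℤ)
        ≤ ∑ _v ∈ G.neighborFinset u, (1:ℤ) :=
      Finset.sum_le_sum fun v _ =>
        mul_le_one₀ (val_le_one _) (val_nonneg' _) (val_le_one _)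
    have h3 : ∑ _v ∈ G.neighborFinset u, (1:ℤ) = ((G.degree u : ℕ) : ℤ) := by simp
    linarith [h2, h3.le, h3.ge]
  calc Sedge G x y ≤ ∑ u, ((G.degree u : ℕ) : ℤ) := h1
    _ = 2 * (G.edgeFinset.card : ℤ) := by
        exact_mod_cast G.sum_degrees_eq_twice_card_edges

omit [DecidableEq V] in
lemma Sself_bounds (x y : V → Fin 2) : 0 ≤ Sself x y ∧ Sself x y ≤ (Fintype.card V : ℤ) := by
  constructor
  · exact Finset.sum_nonneg fun u _ => mul_nonneg (val_nonneg' _) (val_nonneg' _)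
  · calc Sself x y ≤ ∑ _u : V, (1:ℤ) :=
        Finset.sum_le_sum fun u _ =>
          mul_le_one₀ (val_le_one _) (val_nonneg' _) (val_le_one _)
      _ = (Fintype.card V : ℤ) := by simp

omit [DecidableEq V] in
lemma Stot_bounds (x y : V → Fin 2) : 0 ≤ Stot x y ∧ Stot x y ≤ 2 * (Fintype.card V : ℤ) := by
  constructor
  · exact Finset.sum_nonneg fun u _ => add_nonneg (val_nonneg' _) (val_nonneg' _)
  · calc Stot x y ≤ ∑ _u : V, (2:ℤ) :=
        Finset.sum_le_sum fun u _ => by linarith [val_le_one (x u), val_le_one (y u)]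
      _ = 2 * (Fintype.card V : ℤ) := by simp [mul_comm]

private lemma mul_diff_bound {c s s' b m : ℤ} (hc : |c| ≤ b) (hs : 0 ≤ s) (hs2 : s ≤ m)
    (hs' : 0 ≤ s') (hs'2 : s' ≤ m) : c * s - c * s' ≤ b * m := by
  have habs : |s - s'| ≤ m := abs_le.mpr ⟨by linarith, by linarith⟩
  calc c * s - c * s' = c * (s - s') := by ring
    _ ≤ |c * (s - s')| := le_abs_self _
    _ = |c| * |s - s'| := abs_mul _ _
    _ ≤ b * m := mul_le_mul hc habs (abs_nonneg _) (le_trans (abs_nonneg c) hc)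

lemma engy_diff (ht1 : t1 ≤ G.maxDegree + 1) (ht2 : t2 ≤ G.maxDegree + 1)
    (x y x' y' : V → Fin 2) :
    engy G t1 t2 x y - engy G t1 t2 x' y'
      ≤ 4 * (G.edgeFinset.card : ℤ)
        + (6 * (G.maxDegree : ℤ) + 4) * (Fintype.card V : ℤ) := by
  have ht1' : (t1 : ℤ) ≤ (G.maxDegree : ℤ) + 1 := by exact_mod_cast ht1
  have ht2' : (t2 : ℤ) ≤ (G.maxDegree : ℤ) + 1 := by exact_mod_cast ht2
  set Δ : ℤ := (G.maxDegree : ℤ) with hΔ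
  set E : ℤ := (G.edgeFinset.card : ℤ) with hE
  set n : ℤ := (Fintype.card V : ℤ) with hn
  have hΔ0 : 0 ≤ Δ := by positivity
  have hn0 : 0 ≤ n := by positivity
  have ht1'' : (0:ℤ) ≤ (t1 : ℤ) := by positivity
  have ht2'' : (0:ℤ) ≤ (t2 : ℤ) := by positivity
  have e1 : (-2) * Sedge G x y - (-2) * Sedge G x' y' ≤ 2 * (2 * E) :=
    mul_diff_bound (by norm_num) (Sedge_nonneg G x y) (Sedge_le G x y)
      (Sedge_nonneg G x' y') (Sedge_le G x' y')
  have e2 : (-(2 * ((t2 : ℤ) - t1))) * Sself x y - (-(2 * ((t2 : ℤ) - t1))) * Sself x' y'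
      ≤ (2 * (Δ + 1)) * n :=
    mul_diff_bound (abs_le.mpr ⟨by linarith, by linarith⟩)
      (Sself_bounds x y).1 (Sself_bounds x y).2 (Sself_bounds x' y').1 (Sself_bounds x' y').2
  have e3 : (2 * (t2 : ℤ) - 1) * Stot x y - (2 * (t2 : ℤ) - 1) * Stot x' y'
      ≤ (2 * Δ + 1) * (2 * n) :=
    mul_diff_bound (abs_le.mpr ⟨by linarith, by linarith⟩)
      (Stot_bounds x y).1 (Stot_bounds x y).2 (Stot_bounds x' y').1 (Stot_bounds x' y').2
  unfold engy
  nlinarith [e1, e2, e3]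

lemma next_three (hD : G.maxDegree = 0) (z : V → Fin 2) :
    nextConf G (fun _ => t1) (fun _ => t2) (nextConf G (fun _ => t1) (fun _ => t2)
      (nextConf G (fun _ => t1) (fun _ => t2) z))
    = nextConf G (fun _ => t1) (fun _ => t2) z := by
  have hnb : ∀ u : V, G.neighborFinset u = ∅ := by
    intro u
    have h := G.degree_le_maxDegree u
    rw [hD, Nat.le_zero] at h
    exact Finset.card_eq_zero.mp h
  have hstep' : ∀ (w : V → Fin 2) (u : V), nextConf G (fun _ => t1) (fun _ => t2) w u
      = if (w u = 1 ∧ t1 = 0) ∨ (w u = 0 ∧ t2 = 0) then 1 else 0 := by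
    intro w u
    unfold nextConf
    rw [hnb u]
    simp [Nat.le_zero]
  funext u
  rw [hstep', hstep', hstep']
  by_cases h1 : t1 = 0 <;> by_cases h2 : t2 = 0 <;> rcases fin2_cases (z u) with hz | hz <;>
    simp [h1, h2, hz, show (0:Fin 2) ≠ 1 by decide, show (1:Fin 2) ≠ 0 by decide]

end Aux


/-- For the underpopulation dynamics (constant thresholds `t₁, t₂ ≤ Δ + 1`)
on an undirected unsigned graph of maximum degree Δ, any sequence `ω₁, …, ω_T` of pairwise
distinct configurations with `ω_{t+1} = d(ω_t)` satisfies
`T ≤ 4|E| + 2|V| + 4Δ(Δ+1)|V| + 2`. -/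
theorem stmt2 {V : Type*} [Fintype V] [DecidableEq V] (G : SimpleGraph V)
    [DecidableRel G.Adj] (t1 t2 : ℕ)
    (ht1 : t1 ≤ G.maxDegree + 1) (ht2 : t2 ≤ G.maxDegree + 1)
    (T : ℕ) (hT : 1 ≤ T) (ω : ℕ → V → Fin 2)
    (hstep : ∀ t, 1 ≤ t → t < T →
      ω (t + 1) = nextConf G (fun _ => t1) (fun _ => t2) (ω t))
    (hdist : ∀ s t, 1 ≤ s → s ≤ T → 1 ≤ t → t ≤ T → ω s = ω t → s = t) :
    T ≤ 4 * G.edgeFinset.card + 2 * Fintype.card V +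
      4 * G.maxDegree * (G.maxDegree + 1) * Fintype.card V + 2 := by
  by_cases hT2 : T ≤ 2
  · exact hT2.trans (Nat.le_add_left 2 _)
  push_neg at hT2
  by_cases hD0 : G.maxDegree = 0
  · -- maximum degree 0: the dynamics is vertex-wise, d³ = d, so T ≤ 3
    by_cases hV : Fintype.card V = 0
    · have hIsE : IsEmpty V := Fintype.card_eq_zero_iff.mp hV
      have heq : ω 1 = ω T := funext fun u => (hIsE.false u).elim
      have := hdist 1 T le_rfl hT hT le_rfl heq
      omega
    · have hT3 : T ≤ 3 := by
        by_contra hgt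
        push_neg at hgt
        have e2 := hstep 1 le_rfl (by omega)
        have e3 := hstep 2 (by omega) (by omega)
        have e4 := hstep 3 (by omega) (by omega)
        have h42 : ω (3 + 1) = ω (1 + 1) := by
          rw [e4, e3, e2, next_three G t1 t2 hD0]
        have := hdist (3 + 1) (1 + 1) (by omega) (by omega) (by omega) (by omega) h42
        omega
      have hn1 : 1 ≤ Fintype.card V := Nat.pos_of_ne_zero hV
      rw [hD0]
      have hz : 4 * 0 * (0 + 1) * Fintype.card V = 0 := by ring
      omega
  · -- main case: energy decrease argument
    have hΔ1 : 1 ≤ G.maxDegree := Nat.pos_of_ne_zero hD0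
    have chain : ∀ k, k ≤ T - 2 →
        engy G t1 t2 (ω (1 + k)) (ω (1 + k + 1)) + (k : ℤ)
          ≤ engy G t1 t2 (ω 1) (ω 2) := by
      intro k
      induction k with
      | zero => intro _; simp
      | succ k ih =>
        intro hk
        have ihk := ih (by omega)
        have hdec : engy G t1 t2 (ω (1 + k + 1)) (ω (1 + k + 2)) + 1
            ≤ engy G t1 t2 (ω (1 + k)) (ω (1 + k + 1)) := by
          refine engy_dec G t1 t2 (ω (1 + k)) (ω (1 + k + 1)) (ω (1 + k + 2)) ?_ ?_
          · exact hstep (1 + k + 1) (by omega) (by omega)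
          · intro heq
            have := hdist (1 + k + 2) (1 + k) (by omega) (by omega) (by omega) (by omega) heq
            omega
        push_cast
        push_cast at ihk
        have h1 : engy G t1 t2 (ω (1 + (k + 1))) (ω (1 + (k + 1) + 1))
            = engy G t1 t2 (ω (1 + k + 1)) (ω (1 + k + 2)) := by ring_nf
        rw [h1]
        linarith
    have hfin := chain (T - 2) le_rfl
    rw [show 1 + (T - 2) = T - 1 from by omega] at hfin
    have hdiff := engy_diff G t1 t2 ht1 ht2 (ω 1) (ω 2) (ω (T - 1)) (ω (T - 1 + 1))
    have hcast : ((T - 2 : ℕ) : ℤ) = (T : ℤ) - 2 := by omega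
    rw [hcast] at hfin
    have hmain : (T : ℤ) ≤ 4 * (G.edgeFinset.card : ℤ)
        + (6 * (G.maxDegree : ℤ) + 4) * (Fintype.card V : ℤ) + 2 := by linarith
    have hΔ1' : (1 : ℤ) ≤ (G.maxDegree : ℤ) := by exact_mod_cast hΔ1
    have hn0 : (0 : ℤ) ≤ (Fintype.card V : ℤ) := by positivity
    have hfinal : (T : ℤ) ≤ 4 * (G.edgeFinset.card : ℤ) + 2 * (Fintype.card V : ℤ)
        + 4 * (G.maxDegree : ℤ) * ((G.maxDegree : ℤ) + 1) * (Fintype.card V : ℤ) + 2 := by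
      nlinarith [hmain, mul_nonneg (mul_nonneg hn0 (sub_nonneg.mpr hΔ1'))
        (by linarith : (0:ℤ) ≤ 4 * (G.maxDegree : ℤ) + 2)]
    exact_mod_cast hfinal
end

section
/- |([001, ?1?] + [011, ?1?]) − ([100, ?1?] + [110, ?1?])| ≤ 2|E|. -/
open Finset

private lemma telescope_Icc (f : ℕ → ℤ) (n : ℕ) :
    ∑ i ∈ Finset.Icc 1 n, (f (i+1) - f i) = f (n+1) - f 1 := by
  induction n with
  | zero => simp
  | succ m ih =>
    rcases Nat.eq_zero_or_pos m with h | h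
    · subst h; simp
    · rw [Finset.sum_Icc_succ_top (by omega), ih]; ring

/-- `|([001, ?1?] + [011, ?1?]) − ([100, ?1?] + [110, ?1?])| ≤ 2|E|`. -/
theorem stmt7 {V : Type*} [Fintype V] [DecidableEq V] (G : SimpleGraph V)
    [DecidableRel G.Adj] (θp θm : ℕ → ℕ)
    (T : ℕ) (hT : 1 ≤ T) (ω : ℕ → V → Fin 2)
    (hstep : ∀ t, 1 ≤ t → t < T → ω (t + 1) = nextConf G θp θm (ω t))
    (hdist : ∀ s t, 1 ≤ s → s ≤ T → 1 ≤ t → t ≤ T → ω s = ω t → s = t) :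
    |((patCountNbr G T ω 0 0 1 : ℤ) + (patCountNbr G T ω 0 1 1 : ℤ)) -
        ((patCountNbr G T ω 1 0 0 : ℤ) + (patCountNbr G T ω 1 1 0 : ℤ))| ≤
      2 * G.edgeFinset.card := by
  classical
  set n := T - 2 with hn
  set a : ℕ → V → ℤ := fun i u => ((ω i u).val : ℤ) with ha
  set c : V → V → ℤ := fun u v => ∑ i ∈ Finset.Icc 1 n, (a (i+2) u - a i u) * a (i+1) v with hc
  -- Step 1: express the LHS as a double sum
  have key : ((patCountNbr G T ω 0 0 1 : ℤ) + (patCountNbr G T ω 0 1 1 : ℤ)) -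
        ((patCountNbr G T ω 1 0 0 : ℤ) + (patCountNbr G T ω 1 1 0 : ℤ)) =
      ∑ u : V, ∑ v : V, if G.Adj u v then c u v else 0 := by
    unfold patCountNbr
    rw [Finset.card_filter, Finset.card_filter, Finset.card_filter, Finset.card_filter]
    push_cast
    rw [← Finset.sum_add_distrib, ← Finset.sum_add_distrib, ← Finset.sum_sub_distrib]
    rw [Finset.sum_product, ← Finset.univ_product_univ, Finset.sum_product]
    apply Finset.sum_congr rfl
    intro u _
    apply Finset.sum_congr rfl
    intro v _
    by_cases hadj : G.Adj u v
    · simp only [hadj, true_and, if_true, hc, ha]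
      rw [hn]
      apply Finset.sum_congr rfl
      intro i _
      generalize ω i u = A
      generalize ω (i+1) u = B
      generalize ω (i+2) u = C
      generalize ω (i+1) v = D
      fin_cases A <;> fin_cases B <;> fin_cases C <;> fin_cases D <;> simp
    · simp [hadj, hc]
  set g : V → V → ℕ → ℤ := fun u v i => a (i+1) u * a i v + a (i+1) v * a i u with hg
  have hsym : ∀ u v : V, c u v + c v u = g u v (n+1) - g u v 1 := by
    intro u v
    rw [← telescope_Icc (g u v) n, hc]
    simp only
    rw [← Finset.sum_add_distrib]
    apply Finset.sum_congr rfl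
    intro i _
    simp only [hg]
    ring
  have two_key : 2 * (((patCountNbr G T ω 0 0 1 : ℤ) + (patCountNbr G T ω 0 1 1 : ℤ)) -
        ((patCountNbr G T ω 1 0 0 : ℤ) + (patCountNbr G T ω 1 1 0 : ℤ))) =
      ∑ u : V, ∑ v : V, if G.Adj u v then g u v (n+1) - g u v 1 else 0 := by
    rw [key, two_mul]
    nth_rewrite 2 [Finset.sum_comm]
    rw [← Finset.sum_add_distrib]
    apply Finset.sum_congr rfl
    intro u _
    rw [← Finset.sum_add_distrib]
    apply Finset.sum_congr rfl
    intro v _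
    by_cases hadj : G.Adj u v
    · have hadj' : G.Adj v u := hadj.symm
      simp [hadj, hadj', hsym u v]
    · have hadj' : ¬ G.Adj v u := fun h => hadj h.symm
      simp [hadj, hadj']
  have hav : ∀ (j : ℕ) (w : V), 0 ≤ a j w ∧ a j w ≤ 1 := by
    intro j w
    have h2 : (ω j w).val < 2 := (ω j w).isLt
    constructor
    · simp [ha]
    · simp only [ha]; exact_mod_cast Nat.lt_succ_iff.mp h2
  have hb : ∀ (i : ℕ) (u v : V), 0 ≤ g u v i ∧ g u v i ≤ 2 := by
    intro i u v
    obtain ⟨h1, h2⟩ := hav (i+1) u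
    obtain ⟨h3, h4⟩ := hav i v
    obtain ⟨h5, h6⟩ := hav (i+1) v
    obtain ⟨h7, h8⟩ := hav i u
    constructor
    · simp only [hg]; positivity
    · simp only [hg]; nlinarith
  have habs : |2 * ((((patCountNbr G T ω 0 0 1 : ℤ) + (patCountNbr G T ω 0 1 1 : ℤ)) -
        ((patCountNbr G T ω 1 0 0 : ℤ) + (patCountNbr G T ω 1 1 0 : ℤ))))| ≤
      ∑ u : V, ∑ v : V, if G.Adj u v then (2:ℤ) else 0 := by
    rw [two_key]
    refine le_trans (Finset.abs_sum_le_sum_abs _ _) ?_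
    apply Finset.sum_le_sum
    intro u _
    refine le_trans (Finset.abs_sum_le_sum_abs _ _) ?_
    apply Finset.sum_le_sum
    intro v _
    by_cases hadj : G.Adj u v
    · simp only [hadj, if_true]
      obtain ⟨p1, p2⟩ := hb (n+1) u v
      obtain ⟨q1, q2⟩ := hb 1 u v
      rw [abs_le]
      constructor <;> linarith
    · simp [hadj]
  have hdeg : ∑ u : V, ∑ v : V, (if G.Adj u v then (2:ℤ) else 0)
      = 2 * (2 * (G.edgeFinset.card : ℤ)) := by
    have hrow : ∀ u : V, ∑ v : V, (if G.Adj u v then (2:ℤ) else 0) = 2 * (G.degree u : ℤ) := by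
      intro u
      have hcard : (Finset.univ.filter (fun v => G.Adj u v)).card = G.degree u := by
        rw [← SimpleGraph.neighborFinset_eq_filter]
        rfl
      rw [Finset.sum_ite, Finset.sum_const, Finset.sum_const, smul_zero, add_zero, hcard,
        nsmul_eq_mul, mul_comm]
    rw [Finset.sum_congr rfl (fun u _ => hrow u), ← Finset.mul_sum]
    congr 1
    rw [← Nat.cast_sum, SimpleGraph.sum_degrees_eq_twice_card_edges]
    push_cast
    ring
  rw [hdeg, abs_mul, abs_two] at habs
  linarith [habs]
end

section
/- Suppose the threshold functions satisfy θ⁺(k) ≤ Δ + 1 and θ⁻(k) ≤ Δ + 1 for all 1 ≤ k ≤ Δ. Then [100] + [110] ≤ 2|E| + 2Δ(Δ+1)|V|. -/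
open Finset

set_option linter.unusedSectionVars false


namespace Stmt13Aux
variable {V : Type*} [Fintype V] [DecidableEq V] (G : SimpleGraph V) [DecidableRel G.Adj]
  (θp θm : ℕ → ℕ)

def fz (a : Fin 2) : ℤ := (a : ℕ)

lemma fz_zero_or_one (a : Fin 2) : fz a = 0 ∨ fz a = 1 := by unfold fz; omega

lemma fz_eq_zero (a : Fin 2) (h : a = 0) : fz a = 0 := by rw [h]; rfl
lemma fz_eq_one (a : Fin 2) (h : a = 1) : fz a = 1 := by rw [h]; rfl

def Pc (x : V → Fin 2) (v : V) : ℤ :=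
  (((G.neighborFinset v).filter (fun u => x u = 1)).card : ℤ)

lemma Pc_nonneg (x : V → Fin 2) (v : V) : 0 ≤ Pc G x v := Int.natCast_nonneg _

lemma Pc_le_degree (x : V → Fin 2) (v : V) : Pc G x v ≤ (G.degree v : ℤ) := by
  unfold Pc
  have := Finset.card_filter_le (G.neighborFinset v) (fun u => x u = 1)
  rw [SimpleGraph.degree]
  exact_mod_cast this

lemma Pc_eq_sum (x : V → Fin 2) (v : V) :
    Pc G x v = ∑ u ∈ G.neighborFinset v, fz (x u) := by
  unfold Pc
  rw [Finset.card_filter]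
  push_cast
  refine Finset.sum_congr rfl fun u _ => ?_
  rcases fz_zero_or_one (x u) with h | h
  · have hx : ¬ (x u = 1) := by unfold fz at h; omega
    simp only [hx, if_false]
    omega
  · have hx : x u = 1 := by unfold fz at h; omega
    simp only [hx, if_pos]
    decide

def tp (v : V) : ℤ := min (θp (G.degree v) : ℤ) ((G.degree v : ℤ) + 1)
def tm (v : V) : ℤ := min (θm (G.degree v) : ℤ) ((G.degree v : ℤ) + 1)

lemma tp_nonneg (v : V) : 0 ≤ tp G θp v := by unfold tp; positivity
lemma tm_nonneg (v : V) : 0 ≤ tm G θm v := by unfold tm; positivity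
lemma tp_le (v : V) : tp G θp v ≤ (G.degree v : ℤ) + 1 := min_le_right _ _
lemma tm_le (v : V) : tm G θm v ≤ (G.degree v : ℤ) + 1 := min_le_right _ _

lemma ite_eq_one_iff (c : Prop) [Decidable c] : (if c then (1 : Fin 2) else 0) = 1 ↔ c := by
  split_ifs with h <;> simp [h]

lemma next_eq_one_iff (x : V → Fin 2) (v : V) :
    nextConf G θp θm x v = 1 ↔
      tm G θm v ≤ Pc G x v + (tm G θm v - tp G θp v) * fz (x v) := by
  have hP : Pc G x v ≤ (G.degree v : ℤ) := Pc_le_degree G x v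
  have hP0 : 0 ≤ Pc G x v := Pc_nonneg G x v
  have hm : tm G θm v = min ((θm (G.degree v) : ℤ)) ((G.degree v : ℤ) + 1) := rfl
  have hp : tp G θp v = min ((θp (G.degree v) : ℤ)) ((G.degree v : ℤ) + 1) := rfl
  have hPc : ((((G.neighborFinset v).filter (fun u => x u = 1)).card : ℕ) : ℤ) = Pc G x v := rfl
  simp only [nextConf]
  rw [ite_eq_one_iff]
  rcases fz_zero_or_one (x v) with h | h
  · have h0 : x v = 0 := by unfold fz at h; omega
    have h1 : x v ≠ 1 := by rw [h0]; decide
    simp only [h0, show ((0:Fin 2) = 1) ↔ False from by decide,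
      show ((0:Fin 2) = 0) ↔ True from by decide, false_and, false_or, true_and]
    rw [show fz (0 : Fin 2) = 0 from rfl, hm, hp]
    constructor
    · intro hle
      have : ((θm (G.degree v) : ℤ)) ≤ Pc G x v := by rw [← hPc]; exact_mod_cast hle
      omega
    · intro hle
      have : ((θm (G.degree v) : ℤ)) ≤ Pc G x v := by omega
      rw [← hPc] at this
      exact_mod_cast this
  · have h1 : x v = 1 := by unfold fz at h; omega
    have h0 : x v ≠ 0 := by rw [h1]; decide
    simp only [h1, show ((1:Fin 2) = 1) ↔ True from by decide,
      show ((1:Fin 2) = 0) ↔ False from by decide, false_and, or_false, true_and]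
    rw [show fz (1 : Fin 2) = 1 from rfl, hm, hp]
    constructor
    · intro hle
      have : ((θp (G.degree v) : ℤ)) ≤ Pc G x v := by rw [← hPc]; exact_mod_cast hle
      omega
    · intro hle
      have : ((θp (G.degree v) : ℤ)) ≤ Pc G x v := by omega
      rw [← hPc] at this
      exact_mod_cast this

lemma next_eq_zero (x : V → Fin 2) (v : V) (h : nextConf G θp θm x v ≠ 1) :
    nextConf G θp θm x v = 0 := by
  simp only [nextConf] at *
  split_ifs at * <;> simp_all

end Stmt13Aux

namespace Stmt13Aux
variable {V : Type*} [Fintype V] [DecidableEq V] (G : SimpleGraph V) [DecidableRel G.Adj]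
  (θp θm : ℕ → ℕ)

lemma fin_two (a : Fin 2) : a = 0 ∨ a = 1 := by omega

lemma fz0 : fz (0 : Fin 2) = 0 := rfl
lemma fz1 : fz (1 : Fin 2) = 1 := rfl

/-- the (doubled, shifted) local field -/
def sZ (y : V → Fin 2) (v : V) : ℤ :=
  2 * (Pc G y v + (tm G θm v - tp G θp v) * fz (y v) - tm G θm v) + 1

/-- per-vertex energy -/
def hv (x y : V → Fin 2) (v : V) : ℤ :=
  -2 * fz (y v) * Pc G x v - 2 * (tm G θm v - tp G θp v) * (fz (x v) * fz (y v))
    + (2 * tm G θm v - 1) * (fz (x v) + fz (y v))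

/-- energy of a consecutive pair of configurations -/
def en (x y : V → Fin 2) : ℤ := ∑ v, hv G θp θm x y v

lemma sum_mul_Pc (a c : V → Fin 2) :
    ∑ v, fz (c v) * Pc G a v = ∑ v, fz (a v) * Pc G c v := by
  have key : ∀ (f g : V → ℤ), ∑ v, g v * ∑ u ∈ G.neighborFinset v, f u
      = ∑ v, ∑ u, if G.Adj v u then g v * f u else 0 := by
    intro f g
    refine Finset.sum_congr rfl fun v _ => ?_
    rw [Finset.mul_sum, SimpleGraph.neighborFinset_eq_filter, Finset.sum_filter]
  simp only [Pc_eq_sum]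
  rw [key, key]
  rw [Finset.sum_comm]
  refine Finset.sum_congr rfl fun v _ => Finset.sum_congr rfl fun u _ => ?_
  by_cases h : G.Adj u v
  · rw [if_pos h, if_pos h.symm]; ring
  · rw [if_neg h, if_neg fun hc => h hc.symm]

lemma en_sub (x y z : V → Fin 2) :
    en G θp θm x y - en G θp θm y z = ∑ v, (fz (z v) - fz (x v)) * sZ G θp θm y v := by
  have hsym : ∑ v, fz (y v) * Pc G x v = ∑ v, fz (x v) * Pc G y v := sum_mul_Pc G x y
  have key : ∀ v, hv G θp θm x y v - hv G θp θm y z v - (fz (z v) - fz (x v)) * sZ G θp θm y v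
      = -2 * (fz (y v) * Pc G x v) + 2 * (fz (x v) * Pc G y v) := by
    intro v; unfold hv sZ; ring
  have h0 : ∑ v, (hv G θp θm x y v - hv G θp θm y z v
      - (fz (z v) - fz (x v)) * sZ G θp θm y v) = 0 := by
    rw [Finset.sum_congr rfl (fun v _ => key v), Finset.sum_add_distrib]
    have e1 : ∑ v, -2 * (fz (y v) * Pc G x v) = -2 * ∑ v, fz (y v) * Pc G x v := by
      rw [Finset.mul_sum]
    have e2 : ∑ v, 2 * (fz (x v) * Pc G y v) = 2 * ∑ v, fz (x v) * Pc G y v := by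
      rw [Finset.mul_sum]
    rw [e1, e2, hsym]; ring
  rw [Finset.sum_sub_distrib, Finset.sum_sub_distrib] at h0
  unfold en
  linarith

lemma term_ge (x y z : V → Fin 2) (hz : z = nextConf G θp θm y) (v : V) :
    (if x v = 1 ∧ z v = 0 then (1 : ℤ) else 0) ≤ (fz (z v) - fz (x v)) * sZ G θp θm y v := by
  have hchar : z v = 1 ↔ tm G θm v ≤ Pc G y v + (tm G θm v - tp G θp v) * fz (y v) := by
    rw [hz]; exact next_eq_one_iff G θp θm y v
  rcases fin_two (z v) with hz0 | hz1
  · -- z v = 0, so sZ ≤ -1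
    have hne : ¬ (tm G θm v ≤ Pc G y v + (tm G θm v - tp G θp v) * fz (y v)) := by
      intro hc
      have := hchar.mpr hc
      rw [hz0] at this
      exact absurd this (by decide)
    push_neg at hne
    have hs : sZ G θp θm y v ≤ -1 := by unfold sZ; linarith
    rcases fin_two (x v) with hx0 | hx1
    · have : ¬ (x v = 1 ∧ z v = 0) := by rw [hx0]; rintro ⟨h, _⟩; exact absurd h (by decide)
      rw [if_neg this, hx0, hz0, fz0]
      nlinarith [hs]
    · rw [if_pos ⟨hx1, hz0⟩, hx1, hz0, fz0, fz1]
      linarith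
  · -- z v = 1, so sZ ≥ 1
    have hs : 1 ≤ sZ G θp θm y v := by
      have := hchar.mp hz1
      unfold sZ; linarith
    have hzne : ¬ (x v = 1 ∧ z v = 0) := by rw [hz1]; rintro ⟨_, h⟩; exact absurd h (by decide)
    rw [if_neg hzne, hz1, fz1]
    rcases fin_two (x v) with hx0 | hx1
    · rw [hx0, fz0]; linarith
    · rw [hx1, fz1]; linarith

lemma decrease (x y z : V → Fin 2) (hz : z = nextConf G θp θm y) :
    (((univ : Finset V).filter (fun v => x v = 1 ∧ z v = 0)).card : ℤ)
      ≤ en G θp θm x y - en G θp θm y z := by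
  rw [en_sub]
  have hc : (((univ : Finset V).filter (fun v => x v = 1 ∧ z v = 0)).card : ℤ)
      = ∑ v, (if x v = 1 ∧ z v = 0 then (1 : ℤ) else 0) := by
    rw [Finset.card_filter]
    push_cast
    rfl
  rw [hc]
  exact Finset.sum_le_sum fun v _ => term_ge G θp θm x y z hz v

lemma hv_le (x : V → Fin 2) (v : V) :
    hv G θp θm x (nextConf G θp θm x) v ≤ max 0 (2 * tm G θm v - 1) := by
  set y := nextConf G θp θm x with hy
  have hchar : y v = 1 ↔ tm G θm v ≤ Pc G x v + (tm G θm v - tp G θp v) * fz (x v) :=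
    next_eq_one_iff G θp θm x v
  have hP := Pc_le_degree G x v
  have hP0 := Pc_nonneg G x v
  have hb0 := tm_nonneg G θm v
  have hb1 := tm_le G θm v
  have hp0 := tp_nonneg G θp v
  have hp1 := tp_le G θp v
  rcases max_cases (0 : ℤ) (2 * tm G θm v - 1) with ⟨hM, hM2⟩ | ⟨hM, hM2⟩ <;> rw [hM] <;>
  · rcases fin_two (x v) with hx | hx <;> rcases fin_two (y v) with hyv | hyv
    · unfold hv; rw [hx, hyv, fz0]; linarith
    · have hcon := hchar.mp hyv
      rw [hx, fz0] at hcon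
      unfold hv; rw [hx, hyv, fz0, fz1]; linarith
    · have hcon : ¬ (tm G θm v ≤ Pc G x v + (tm G θm v - tp G θp v) * fz (x v)) := by
        intro hc; have := hchar.mpr hc; rw [hyv] at this; exact absurd this (by decide)
      rw [hx, fz1] at hcon
      unfold hv; rw [hx, hyv, fz0, fz1]; linarith
    · have hcon := hchar.mp hyv
      rw [hx, fz1] at hcon
      unfold hv; rw [hx, hyv, fz1]; linarith

lemma hv_ge (x : V → Fin 2) (v : V) :
    max 0 (2 * tm G θm v - 1) - (2 * (G.degree v : ℤ) + 2)
      ≤ hv G θp θm x (nextConf G θp θm x) v := by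
  set y := nextConf G θp θm x with hy
  have hchar : y v = 1 ↔ tm G θm v ≤ Pc G x v + (tm G θm v - tp G θp v) * fz (x v) :=
    next_eq_one_iff G θp θm x v
  have hP := Pc_le_degree G x v
  have hP0 := Pc_nonneg G x v
  have hb0 := tm_nonneg G θm v
  have hb1 := tm_le G θm v
  have hp0 := tp_nonneg G θp v
  have hp1 := tp_le G θp v
  rcases max_cases (0 : ℤ) (2 * tm G θm v - 1) with ⟨hM, hM2⟩ | ⟨hM, hM2⟩ <;> rw [hM] <;>
  · rcases fin_two (x v) with hx | hx <;> rcases fin_two (y v) with hyv | hyv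
    · unfold hv; rw [hx, hyv, fz0]; linarith
    · have hcon := hchar.mp hyv
      rw [hx, fz0] at hcon
      unfold hv; rw [hx, hyv, fz0, fz1]; linarith
    · have hcon : ¬ (tm G θm v ≤ Pc G x v + (tm G θm v - tp G θp v) * fz (x v)) := by
        intro hc; have := hchar.mpr hc; rw [hyv] at this; exact absurd this (by decide)
      rw [hx, fz1] at hcon
      unfold hv; rw [hx, hyv, fz0, fz1]; linarith
    · have hcon := hchar.mp hyv
      rw [hx, fz1] at hcon
      unfold hv; rw [hx, hyv, fz1]; linarith

lemma en_range (x x' : V → Fin 2) :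
    en G θp θm x (nextConf G θp θm x) - en G θp θm x' (nextConf G θp θm x')
      ≤ ∑ v, (2 * (G.degree v : ℤ) + 2) := by
  unfold en
  rw [← Finset.sum_sub_distrib]
  refine Finset.sum_le_sum fun v _ => ?_
  have h1 := hv_le G θp θm x v
  have h2 := hv_ge G θp θm x' v
  linarith

lemma tele (F : ℕ → ℤ) : ∀ m : ℕ, ∑ t ∈ Finset.Icc 1 m, (F t - F (t + 1)) = F 1 - F (m + 1)
  | 0 => by simp
  | (m + 1) => by
    rw [Finset.sum_Icc_succ_top (by omega : 1 ≤ m + 1), tele F m]; ring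

lemma patsum {V : Type*} [Fintype V] [DecidableEq V] (T : ℕ) (ω : ℕ → V → Fin 2) :
    patCount T ω 1 0 0 + patCount T ω 1 1 0
      = ∑ t ∈ Finset.Icc 1 (T - 2),
          ((univ : Finset V).filter (fun v => ω t v = 1 ∧ ω (t + 2) v = 0)).card := by
  unfold patCount
  rw [Finset.card_filter, Finset.card_filter, Finset.sum_product, Finset.sum_product,
    ← Finset.sum_add_distrib]
  refine Eq.trans (Finset.sum_congr rfl fun v _ => (Finset.sum_add_distrib).symm) ?_
  rw [Finset.sum_comm]
  refine Finset.sum_congr rfl fun t _ => ?_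
  rw [Finset.card_filter]
  refine Finset.sum_congr rfl fun v _ => ?_
  rcases fin_two (ω (t + 1) v) with h | h <;> rcases fin_two (ω t v) with h2 | h2 <;>
    rcases fin_two (ω (t + 2) v) with h3 | h3 <;> simp [h, h2, h3]


end Stmt13Aux


set_option maxHeartbeats 1000000 in
/-- If `θ⁺(k) ≤ Δ + 1` and `θ⁻(k) ≤ Δ + 1` for all `1 ≤ k ≤ Δ`, then
`[100] + [110] ≤ 2|E| + 2Δ(Δ+1)|V|`. -/
theorem stmt13 {V : Type*} [Fintype V] [DecidableEq V] (G : SimpleGraph V)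
    [DecidableRel G.Adj] (θp θm : ℕ → ℕ)
    (hθp : ∀ k, 1 ≤ k → k ≤ G.maxDegree → θp k ≤ G.maxDegree + 1)
    (hθm : ∀ k, 1 ≤ k → k ≤ G.maxDegree → θm k ≤ G.maxDegree + 1)
    (T : ℕ) (hT : 1 ≤ T) (ω : ℕ → V → Fin 2)
    (hstep : ∀ t, 1 ≤ t → t < T → ω (t + 1) = nextConf G θp θm (ω t))
    (hdist : ∀ s t, 1 ≤ s → s ≤ T → 1 ≤ t → t ≤ T → ω s = ω t → s = t) :
    patCount T ω 1 0 0 + patCount T ω 1 1 0 ≤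
      2 * G.edgeFinset.card + 2 * G.maxDegree * (G.maxDegree + 1) * Fintype.card V := by
  by_cases hT3 : T < 3
  · -- trivial: the time interval is empty
    have h0 : T - 2 = 0 := by omega
    have : ∀ y1 y2 y3 : Fin 2, patCount T ω y1 y2 y3 = 0 := by
      intro y1 y2 y3
      unfold patCount
      rw [h0]
      simp
    rw [this, this]
    exact Nat.zero_le _
  push_neg at hT3
  by_cases hΔ : G.maxDegree = 0
  · -- impossible: with no edges the first three configurations can't be pairwise distinct
    exfalso
    have hdeg : ∀ v : V, G.degree v = 0 := fun v =>
      Nat.le_zero.mp (hΔ ▸ G.degree_le_maxDegree v)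
    have hnb : ∀ (x : V → Fin 2) (v : V),
        ((G.neighborFinset v).filter (fun u => x u = 1)).card = 0 := by
      intro x v
      have h1 : G.neighborFinset v = ∅ := Finset.card_eq_zero.mp (hdeg v)
      rw [h1, Finset.filter_empty, Finset.card_empty]
    have hnext : ∀ (x : V → Fin 2) (v : V), nextConf G θp θm x v =
        if (x v = 1 ∧ θp 0 = 0) ∨ (x v = 0 ∧ θm 0 = 0) then 1 else 0 := by
      intro x v
      unfold nextConf
      rw [hdeg v, hnb x v]
      congr 1
      simp [Nat.le_zero]
    have h2 : ω 2 = nextConf G θp θm (ω 1) := hstep 1 le_rfl (by omega)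
    have h3 : ω 3 = nextConf G θp θm (ω 2) := hstep 2 (by omega) (by omega)
    by_cases hp : θp 0 = 0 <;> by_cases hm : θm 0 = 0
    · -- everything becomes 1 : ω 2 = ω 3
      have hval : ∀ (x : V → Fin 2) (v : V), nextConf G θp θm x v = 1 := by
        intro x v
        rw [hnext]
        rcases Stmt13Aux.fin_two (x v) with h | h <;> simp [h, hp, hm]
      have : ω 2 = ω 3 := by
        funext v; rw [h2, h3, hval, hval]
      exact absurd (hdist 2 3 (by omega) (by omega) (by omega) (by omega) this) (by omega)
    · -- identity map : ω 1 = ω 2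
      have : ω 1 = ω 2 := by
        funext v
        rw [h2, hnext]
        rcases Stmt13Aux.fin_two (ω 1 v) with h | h <;> simp [h, hp, hm]
      exact absurd (hdist 1 2 (by omega) (by omega) (by omega) (by omega) this) (by omega)
    · -- negation map : ω 1 = ω 3
      have hval : ∀ (x : V → Fin 2) (v : V), x v = 1 → nextConf G θp θm x v = 0 := by
        intro x v h
        rw [hnext]
        simp [h, hp, hm]
      have hval0 : ∀ (x : V → Fin 2) (v : V), x v = 0 → nextConf G θp θm x v = 1 := by
        intro x v h
        rw [hnext]
        simp [h, hp, hm]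
      have : ω 1 = ω 3 := by
        funext v
        rcases Stmt13Aux.fin_two (ω 1 v) with h | h
        · have ha : ω 2 v = 1 := by rw [h2]; exact hval0 _ _ h
          have hb : ω 3 v = 0 := by rw [h3]; exact hval _ _ ha
          rw [h, hb]
        · have ha : ω 2 v = 0 := by rw [h2]; exact hval _ _ h
          have hb : ω 3 v = 1 := by rw [h3]; exact hval0 _ _ ha
          rw [h, hb]
      exact absurd (hdist 1 3 (by omega) (by omega) (by omega) (by omega) this) (by omega)
    · -- everything becomes 0 : ω 2 = ω 3
      have hval : ∀ (x : V → Fin 2) (v : V), nextConf G θp θm x v = 0 := by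
        intro x v
        rw [hnext]
        rcases Stmt13Aux.fin_two (x v) with h | h <;> simp [h, hp, hm]
      have : ω 2 = ω 3 := by
        funext v; rw [h2, h3, hval, hval]
      exact absurd (hdist 2 3 (by omega) (by omega) (by omega) (by omega) this) (by omega)
  · -- main case : T ≥ 3 and maxDegree ≥ 1
    have hΔ1 : 1 ≤ G.maxDegree := by omega
    set F : ℕ → ℤ := fun t => Stmt13Aux.en G θp θm (ω t) (ω (t + 1)) with hF
    -- per-step decrease
    have hdec : ∀ t ∈ Finset.Icc 1 (T - 2),
        ((((univ : Finset V)).filter (fun v => ω t v = 1 ∧ ω (t + 2) v = 0)).card : ℤ)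
          ≤ F t - F (t + 1) := by
      intro t ht
      rw [Finset.mem_Icc] at ht
      have hz : ω (t + 2) = nextConf G θp θm (ω (t + 1)) :=
        hstep (t + 1) (by omega) (by omega)
      have := Stmt13Aux.decrease G θp θm (ω t) (ω (t + 1)) (ω (t + 2)) hz
      simpa [hF] using this
    -- telescoping
    have htel : ∑ t ∈ Finset.Icc 1 (T - 2), (F t - F (t + 1)) = F 1 - F (T - 1) := by
      rw [Stmt13Aux.tele F (T - 2)]
      congr 2
      omega
    -- range bound
    have hrange : F 1 - F (T - 1) ≤ ∑ v, (2 * (G.degree v : ℤ) + 2) := by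
      have h1 : ω 2 = nextConf G θp θm (ω 1) := hstep 1 le_rfl (by omega)
      have h2 : ω (T - 1 + 1) = nextConf G θp θm (ω (T - 1)) := by
        have : T - 1 + 1 = T := by omega
        rw [this]
        have := hstep (T - 1) (by omega) (by omega)
        rwa [show T - 1 + 1 = T from by omega] at this
      have := Stmt13Aux.en_range G θp θm (ω 1) (ω (T - 1))
      simp only [hF]
      rw [show (1 : ℕ) + 1 = 2 from rfl, h1, h2]
      exact this
    -- sum of degrees
    have hsumdeg : ∑ v, (2 * (G.degree v : ℤ) + 2)
        = 4 * (G.edgeFinset.card : ℤ) + 2 * (Fintype.card V : ℤ) := by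
      rw [Finset.sum_add_distrib, ← Finset.mul_sum]
      have hs : ∑ v, (G.degree v : ℤ) = ((∑ v, G.degree v : ℕ) : ℤ) := by push_cast; rfl
      rw [hs, G.sum_degrees_eq_twice_card_edges]
      push_cast
      rw [Finset.sum_const, Finset.card_univ]
      push_cast
      ring
    -- put together, in ℤ
    have hmain : ((patCount T ω 1 0 0 + patCount T ω 1 1 0 : ℕ) : ℤ)
        ≤ 4 * (G.edgeFinset.card : ℤ) + 2 * (Fintype.card V : ℤ) := by
      rw [Stmt13Aux.patsum T ω]
      push_cast
      calc ∑ t ∈ Finset.Icc 1 (T - 2),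
            ((((univ : Finset V)).filter (fun v => ω t v = 1 ∧ ω (t + 2) v = 0)).card : ℤ)
          ≤ ∑ t ∈ Finset.Icc 1 (T - 2), (F t - F (t + 1)) := Finset.sum_le_sum hdec
        _ = F 1 - F (T - 1) := htel
        _ ≤ ∑ v, (2 * (G.degree v : ℤ) + 2) := hrange
        _ = _ := hsumdeg
    -- back to ℕ and conclude
    have hmain' : patCount T ω 1 0 0 + patCount T ω 1 1 0
        ≤ 4 * G.edgeFinset.card + 2 * Fintype.card V := by exact_mod_cast hmain
    have hE : 2 * G.edgeFinset.card ≤ G.maxDegree * Fintype.card V := by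
      rw [← G.sum_degrees_eq_twice_card_edges]
      calc ∑ v, G.degree v ≤ ∑ _v : V, G.maxDegree :=
            Finset.sum_le_sum fun v _ => G.degree_le_maxDegree v
        _ = G.maxDegree * Fintype.card V := by
            rw [Finset.sum_const, Finset.card_univ, smul_eq_mul, mul_comm]
    have hfin : (G.maxDegree + 2) * Fintype.card V
        ≤ 2 * G.maxDegree * (G.maxDegree + 1) * Fintype.card V := by
      apply Nat.mul_le_mul_right
      nlinarith [hΔ1]
    calc patCount T ω 1 0 0 + patCount T ω 1 1 0
        ≤ 4 * G.edgeFinset.card + 2 * Fintype.card V := hmain'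
      _ = 2 * G.edgeFinset.card + (2 * G.edgeFinset.card + 2 * Fintype.card V) := by ring
      _ ≤ 2 * G.edgeFinset.card + (G.maxDegree * Fintype.card V + 2 * Fintype.card V) := by
          omega
      _ = 2 * G.edgeFinset.card + (G.maxDegree + 2) * Fintype.card V := by ring
      _ ≤ 2 * G.edgeFinset.card + 2 * G.maxDegree * (G.maxDegree + 1) * Fintype.card V := by
          omega
end
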